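/- arXiv:2506.01003 — 7 statements merged into one kernel-verified Lean document; each statement's English description precedes it below -/
import Mathlib

section
/- Let (n, v, γ) be a sequential decision-making mechanism, let 0 ≤ k ≤ n, let s be an action profile with γ true at s, and let s' be an action profile agreeing with s on the actions of all agents i ≤ k. Then either γ is true at s', or there exist a positive d ≤ n − k and an agent i ≤ n who is d-order responsible under s'. -/
/-- A sequential decision-making mechanism has `n` agents acting in order; agent `i`
controls an action block of type `A i` (the Boolean valuations of its variable block),
and the deontic constraint is a predicate `γ` on action profiles.
`Resp γ d i s` says that agent `i` is `d`-order responsible under profile `s`: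
`R^d_i = Gap_{d-1} ∧ ∃v_i ∀v_{i+1} … ∀v_n ¬Gap_{d-1}`,
where `Gap_{d-1} = ¬γ ∧ ⋀_{j≤n} ⋀_{1≤e<d} ¬R^e_j`. -/
def Resp {n : ℕ} {A : Fin n → Type} (γ : (∀ i, A i) → Prop) :
    (d : ℕ) → Fin n → (∀ i, A i) → Prop
  | 0, _, _ => False
  | d+1, i, s =>
    (¬ γ s ∧ ∀ e ≤ d, ∀ j, ¬ Resp γ e j s) ∧
    ∃ t : ∀ i', A i', (∀ j, j < i → t j = s j) ∧
      ∀ u : ∀ i', A i', (∀ j, j ≤ i → u j = t j) →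
        ¬ (¬ γ u ∧ ∀ e ≤ d, ∀ j, ¬ Resp γ e j u)
termination_by d => d
decreasing_by all_goals omega

/-- A mechanism is `d`-gap-free if for every profile violating the deontic constraint
there are `d' ≤ d` and an agent who is `d'`-order responsible. -/
def GapFree {n : ℕ} {A : Fin n → Type} (γ : (∀ i, A i) → Prop) (d : ℕ) : Prop :=
  ∀ s, ¬ γ s → ∃ d' ≤ d, ∃ i, Resp γ d' i s

/-- If `γ` holds at `s` and `s'` agrees with `s` on the actions of the first `k`
agents, then either `γ` holds at `s'`, or some agent is `d`-order responsible
under `s'` for some positive `d ≤ n - k`. -/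
theorem gap_lemma {n : ℕ} {A : Fin n → Type} (γ : (∀ i, A i) → Prop)
    (k : ℕ) (hk : k ≤ n) (s s' : ∀ i, A i) (hs : γ s)
    (hagree : ∀ i : Fin n, (i : ℕ) < k → s' i = s i) :
    γ s' ∨ ∃ d, 0 < d ∧ d ≤ n - k ∧ ∃ i, Resp γ d i s' := by
  by_cases hγ : γ s'
  · exact Or.inl hγ
  right
  by_contra h
  push_neg at h
  have key : ∀ j ≤ n - k, ∃ u : ∀ i, A i,
      (∀ i : Fin n, (i : ℕ) < k + j → u i = s i) ∧
      ¬ γ u ∧ ∀ e ≤ n - k - j, ∀ p, ¬ Resp γ e p u := by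
    intro j
    induction j with
    | zero =>
      intro _
      refine ⟨s', fun i hi => hagree i (by omega), hγ, fun e he p hr => ?_⟩
      match e, hr with
      | 0, hr => rw [Resp] at hr; exact hr
      | e + 1, hr => exact h (e + 1) (by omega) (by omega) p hr
    | succ j ih =>
      intro hj
      obtain ⟨u, hu1, hu2, hu3⟩ := ih (by omega)
      have hkj : k + j < n := by omega
      have hnr := hu3 (n - k - j) le_rfl ⟨k + j, hkj⟩
      have hd : n - k - j = (n - k - (j + 1)) + 1 := by omega
      rw [hd] at hnr
      rw [Resp] at hnr
      push_neg at hnr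
      have hgap : ¬ γ u ∧ ∀ e ≤ n - k - (j + 1), ∀ p, ¬ Resp γ e p u :=
        ⟨hu2, fun e he p => hu3 e (by omega) p⟩
      have hts : ∀ p : Fin n, p < (⟨k + j, hkj⟩ : Fin n) → s p = u p := by
        intro p hp
        exact (hu1 p hp).symm
      obtain ⟨u', hu'1, hu'2⟩ := hnr hgap s hts
      refine ⟨u', fun i hi => ?_, ?_, ?_⟩
      · exact hu'1 i (by simp only [Fin.le_def]; omega)
      · exact hu'2.1
      · exact hu'2.2
  obtain ⟨u, hu1, hu2, _⟩ := key (n - k) le_rfl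
  have : u = s := funext fun i => hu1 i (by omega)
  exact hu2 (this ▸ hs)
end

section
/- If the deontic constraint γ of a sequential decision-making mechanism with n agents is satisfiable, then the mechanism is n-gap-free: for every action profile violating γ there exist d ≤ n and an agent who is d-order responsible under that profile. -/
/-- If the deontic constraint `γ` is satisfiable, then the `n`-agent mechanism is
`n`-gap-free: every `γ`-violating profile has an agent who is `d`-order
responsible for some `d ≤ n`. -/
theorem satisfiable_imp_n_gapFree {n : ℕ} {A : Fin n → Type}
    (γ : (∀ i, A i) → Prop) (hsat : ∃ s, γ s) :
    ∀ s, ¬ γ s → ∃ d ≤ n, ∃ i, Resp γ d i s := by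
  obtain ⟨w, hw⟩ := hsat
  intro s hγs
  by_contra hno
  push_neg at hno
  -- hno : ∀ d ≤ n, ∀ i, ¬ Resp γ d i s
  have key : ∀ k, k ≤ n → ∃ u : ∀ i, A i,
      (∀ j : Fin n, (j : ℕ) < k → u j = w j) ∧
      ¬ γ u ∧ ∀ e ≤ n - k, ∀ j, ¬ Resp γ e j u := by
    intro k
    induction k with
    | zero =>
      intro _
      exact ⟨s, fun j h => absurd h (Nat.not_lt_zero _), hγs,
        fun e he j => hno e (by omega) j⟩
    | succ k ih =>
      intro hk
      obtain ⟨u, hagree, hγu, hgap⟩ := ih (Nat.le_of_succ_le hk)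
      set i : Fin n := ⟨k, hk⟩ with hi
      have hnr := hgap (n - k) le_rfl i
      have hd : n - k = (n - (k + 1)) + 1 := by omega
      rw [hd] at hnr
      rw [Resp] at hnr
      have hgap' : ¬ γ u ∧ ∀ e ≤ n - (k + 1), ∀ j, ¬ Resp γ e j u :=
        ⟨hγu, fun e he j => hgap e (by omega) j⟩
      have hnex : ¬ ∃ t : ∀ i', A i', (∀ j, j < i → t j = u j) ∧
          ∀ u' : ∀ i', A i', (∀ j, j ≤ i → u' j = t j) →
            ¬ (¬ γ u' ∧ ∀ e ≤ n - (k + 1), ∀ j, ¬ Resp γ e j u') :=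
        fun h => hnr ⟨hgap', h⟩
      push_neg at hnex
      have htw : ∀ j, j < i → w j = u j := by
        intro j hj
        exact (hagree j (by simpa [Fin.lt_def, hi] using hj)).symm
      obtain ⟨u', hu'agree, hu'gap⟩ := hnex w htw
      refine ⟨u', ?_, hu'gap⟩
      intro j hj
      exact hu'agree j (by simp [Fin.le_def, hi]; omega)
  obtain ⟨u, hagree, hγu, _⟩ := key n le_rfl
  have : u = w := funext fun j => hagree j j.isLt
  exact hγu (this ▸ hw)
end

section
/- Let (2d+1, v, γ) be a mechanism, 0 ≤ k ≤ d, and s = (s₁,…,s_{2d+1}) an action profile. If the game node (s₁,…,s_{2k+1}) is winning for Moralist, then either γ is true at s, or there exist a positive d' ≤ d − k and an agent i ≤ 2d+1 who is d'-order responsible under s. -/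
/-- `AltTrue n A γ k s` : alternating quantification over the remaining blocks
`k, k+1, …, n-1` (a `∀` over block `k` when `k` is even in 0-based counting,
i.e. blocks 1,3,5,… in 1-based counting, and `∃` when `k` is odd), of the
statement that `γ` holds at the resulting profile.  Reading `∀` as Devil's
moves and `∃` as Moralist's moves, `AltTrue n A γ k s` says that the game node
reached after the first `k` moves recorded in `s` is winning for Moralist. -/
def AltTrue (n : ℕ) (A : Fin n → Type) (γ : (∀ i, A i) → Prop) :
    (k : ℕ) → (∀ i, A i) → Prop :=
  fun k s =>
    if h : k < n then
      if k % 2 = 0 then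
        ∀ a : A ⟨k, h⟩, AltTrue n A γ (k+1) (Function.update s ⟨k, h⟩ a)
      else
        ∃ a : A ⟨k, h⟩, AltTrue n A γ (k+1) (Function.update s ⟨k, h⟩ a)
    else γ s
termination_by k => n - k
decreasing_by all_goals omega

theorem AltTrue_mono {n : ℕ} {A : Fin n → Type} {γ : (∀ i, A i) → Prop} :
    ∀ (k : ℕ) (s s' : ∀ i, A i), (∀ j : Fin n, (j : ℕ) < k → s j = s' j) →
      AltTrue n A γ k s → AltTrue n A γ k s' := fun k s s' h hs => by
  rw [AltTrue] at hs ⊢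
  by_cases hkn : k < n
  · rw [dif_pos hkn] at hs ⊢
    have agree : ∀ a : A ⟨k, hkn⟩, ∀ j : Fin n, (j : ℕ) < k + 1 →
        Function.update s ⟨k, hkn⟩ a j = Function.update s' ⟨k, hkn⟩ a j := by
      intro a j hj
      by_cases hjk : j = ⟨k, hkn⟩
      · subst hjk; simp
      · rw [Function.update_of_ne hjk, Function.update_of_ne hjk]
        have hne : (j : ℕ) ≠ k := fun hh => hjk (Fin.ext hh)
        exact h j (by omega)
    by_cases hpar : k % 2 = 0
    · rw [if_pos hpar] at hs ⊢
      intro a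
      exact AltTrue_mono (k+1) _ _ (agree a) (hs a)
    · rw [if_neg hpar] at hs ⊢
      obtain ⟨a, ha⟩ := hs
      exact ⟨a, AltTrue_mono (k+1) _ _ (agree a) ha⟩
  · rw [dif_neg hkn] at hs ⊢
    have hss : s = s' := funext fun j => h j (by omega)
    rwa [← hss]
termination_by k => n - k
decreasing_by all_goals omega

/-- If the node `(s₁,…,s_{2k+1})` is winning for Moralist, then either `γ` holds
at `s`, or some agent is `d'`-order responsible under `s` for some positive
`d' ≤ d - k`. -/
theorem win_imp_responsible {d : ℕ} {A : Fin (2*d+1) → Type}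
    (γ : (∀ i, A i) → Prop) (k : ℕ) (hk : k ≤ d) (s : ∀ i, A i)
    (hwin : AltTrue (2*d+1) A γ (2*k+1) s) :
    γ s ∨ ∃ d', 0 < d' ∧ d' ≤ d - k ∧ ∃ i, Resp γ d' i s := by
  have main : ∀ m k, k ≤ d → d - k = m → ∀ s : ∀ i, A i,
      AltTrue (2*d+1) A γ (2*k+1) s →
      γ s ∨ ∃ d', 0 < d' ∧ d' ≤ d - k ∧ ∃ i, Resp γ d' i s := by
    intro m
    induction m with
    | zero =>
      intro k hk hm s hwin
      have hkd : k = d := by omega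
      subst hkd
      rw [AltTrue, dif_neg (by omega)] at hwin
      exact Or.inl hwin
    | succ m ih =>
      intro k hk hm s hwin
      have hklt : k < d := by omega
      rw [AltTrue, dif_pos (show 2*k+1 < 2*d+1 by omega), if_neg (by omega)] at hwin
      obtain ⟨a, ha⟩ := hwin
      by_cases hγ : γ s
      · exact Or.inl hγ
      by_cases hresp : ∃ d', 0 < d' ∧ d' ≤ d - k ∧ ∃ i, Resp γ d' i s
      · exact Or.inr hresp
      exfalso
      apply hresp
      refine ⟨m+1, Nat.succ_pos m, by omega, ⟨2*k+1, by omega⟩, ?_⟩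
      rw [Resp]
      constructor
      · refine ⟨hγ, ?_⟩
        intro e he j hre
        rcases Nat.eq_zero_or_pos e with h0 | h0
        · subst h0; rw [Resp] at hre; exact hre
        · exact hresp ⟨e, h0, by omega, j, hre⟩
      · refine ⟨Function.update s ⟨2*k+1, by omega⟩ a, ?_, ?_⟩
        · intro j hj
          exact Function.update_of_ne (ne_of_lt hj) _ _
        · intro u hu hbad
          have hAu : AltTrue (2*d+1) A γ (2*k+1+1) u := by
            refine AltTrue_mono (2*k+1+1) (Function.update s ⟨2*k+1, by omega⟩ a) u ?_ ha
            intro j hj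
            exact (hu j (by simp only [Fin.le_def, Fin.val_mk]; omega)).symm
          rw [AltTrue, dif_pos (show 2*k+1+1 < 2*d+1 by omega), if_pos (by omega)] at hAu
          have hAu3 := hAu (u ⟨2*k+1+1, by omega⟩)
          rw [Function.update_eq_self] at hAu3
          have heq : 2*(k+1)+1 = 2*k+1+1+1 := by ring
          have hres := ih (k+1) (by omega) (by omega) u (by rw [heq]; exact hAu3)
          rcases hres with hγu | ⟨d', hd0, hdle, j, hj⟩
          · exact hbad.1 hγu
          · exact hbad.2 d' (by omega) j hj
  exact main (d - k) k hk rfl s hwin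
end

section
/- For d ≥ 0, a quantifier-free Boolean formula φ over the disjoint variable blocks x₁,…,x_{2d+1}, and the associated canonical mechanism M(φ, x₁,…,x_{2d+1}): if the closed formula ∀x₁ ∃x₂ ∀x₃ … ∀x_{2d+1} φ is true, then for every action profile s of the mechanism, either the deontic constraint γ holds at s, or there exist a positive d' ≤ d and an agent i ≤ 2d+1 who is d'-order responsible under s. -/
/-- Action block of agent `i` in the canonical mechanism `M(φ, x₁,…,x_{2d+1})`:
the original block `X i`, extended by one fresh Boolean variable `q` exactly when
`i` is even in 1-based counting (odd in 0-based counting); for the other agents the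
extension is the empty block `Fin 0 → Bool`. -/
def CanA {d : ℕ} (X : Fin (2*d+1) → Type) (i : Fin (2*d+1)) : Type :=
  X i × (Fin ((i : ℕ) % 2) → Bool)

/-- Deontic constraint of the canonical mechanism: `γ = φ ∧ ⋀_{1≤i≤d} q_{2i}`. -/
def canGamma {d : ℕ} (X : Fin (2*d+1) → Type) (φ : (∀ i, X i) → Prop)
    (s : ∀ i, CanA X i) : Prop :=
  φ (fun i => (s i).1) ∧ ∀ i, ∀ j, (s i).2 j = true

/-- `s` conforms to the Devil strategy `σ`: every odd-numbered (1-based; even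
0-based) block of `s` is the one prescribed by `σ`. -/
def Conform {n : ℕ} {A : Fin n → Type}
    (σ : ∀ i : Fin n, (∀ j, A j) → A i) (s : ∀ i, A i) : Prop :=
  ∀ i : Fin n, (i : ℕ) % 2 = 0 → s i = σ i s

open Classical in
/-- The degree of immorality `‖s‖`: one sin for each fresh variable `q_{2i}`
that is false under `s`, plus one sin if `s` conforms to the Devil strategy `σ`. -/
noncomputable def immorality {d : ℕ} {X : Fin (2*d+1) → Type}
    (σ : ∀ i : Fin (2*d+1), (∀ j, CanA X j) → CanA X i)
    (s : ∀ i, CanA X i) : ℕ :=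
  (Finset.univ.filter (fun i : Fin (2*d+1) => ∃ j, (s i).2 j = false)).card
  + (if Conform σ s then 1 else 0)


/-!
Call `s` a `c`-gap if it violates `γ` and nobody is responsible for it of order at most `c`.
By induction on `c`: if Moralist wins the QBF game after the first `k` moves of `s`, with `c`
of her moves still to come and every fresh variable before block `k` set to true, then `s` is
not a `c`-gap. For `c = 0` the game is over, so `γ` holds. Otherwise, were `s` a `(c+1)`-gap,
the agent owning block `k` would be `(c+1)`-order responsible: playing Moralist's winning move
together with `q = true` keeps Moralist winning two blocks later, with `c` moves to come,
whatever the other agents do, so by induction no completion is a `c`-gap. Truth of the QBF is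
the case `k = 1`, `c = d`.
-/

section Responsibility

variable {n : ℕ} {A : Fin n → Type} (γ : (∀ i, A i) → Prop)

def Gap (d : ℕ) (s : ∀ i, A i) : Prop :=
  ¬ γ s ∧ ∀ e ≤ d, ∀ j, ¬ Resp γ e j s

variable {γ}

theorem not_resp_zero (i : Fin n) (s : ∀ i, A i) : ¬ Resp γ 0 i s := by
  rw [Resp]
  exact id

theorem resp_succ_iff {d : ℕ} {i : Fin n} {s : ∀ i, A i} :
    Resp γ (d + 1) i s ↔ Gap γ d s ∧ ∃ t : ∀ i, A i, (∀ j, j < i → t j = s j) ∧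
      ∀ u : ∀ i, A i, (∀ j, j ≤ i → u j = t j) → ¬ Gap γ d u := by
  rw [Resp]
  rfl

theorem Gap.of_succ {d : ℕ} {s : ∀ i, A i} (h : Gap γ (d + 1) s) : Gap γ d s :=
  ⟨h.1, fun e he => h.2 e (he.trans d.le_succ)⟩

theorem not_gap_succ_of_forall_not_gap {d : ℕ} {s : ∀ i, A i} (i : Fin n) (t : ∀ i, A i)
    (hts : ∀ j, j < i → t j = s j)
    (ht : ∀ u : ∀ i, A i, (∀ j, j ≤ i → u j = t j) → ¬ Gap γ d u) :
    ¬ Gap γ (d + 1) s := fun hs =>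
  hs.2 (d + 1) le_rfl i (resp_succ_iff.2 ⟨hs.of_succ, t, hts, ht⟩)

theorem exists_resp_of_not_gap {d : ℕ} {s : ∀ i, A i} (hγ : ¬ γ s) (hs : ¬ Gap γ d s) :
    ∃ e, 0 < e ∧ e ≤ d ∧ ∃ i, Resp γ e i s := by
  simp only [Gap, not_and, not_forall, not_not] at hs
  obtain ⟨e, he, i, hr⟩ := hs hγ
  have he0 : e ≠ 0 := by rintro rfl; exact not_resp_zero i s hr
  exact ⟨e, Nat.pos_of_ne_zero he0, he, i, hr⟩

end Responsibility

section AltTrue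

variable {n : ℕ} {A : Fin n → Type} {γ : (∀ i, A i) → Prop}

theorem altTrue_of_ge {k : ℕ} (hk : n ≤ k) {s : ∀ i, A i} :
    AltTrue n A γ k s ↔ γ s := by
  rw [AltTrue, dif_neg (by omega)]

theorem AltTrue.succ_of_even {k : ℕ} (hk : k < n) (heven : k % 2 = 0) {s : ∀ i, A i}
    (h : AltTrue n A γ k s) : AltTrue n A γ (k + 1) s := by
  rw [AltTrue, dif_pos hk, if_pos heven] at h
  simpa using h (s ⟨k, hk⟩)

theorem AltTrue.exists_succ_of_odd {k : ℕ} (hk : k < n) (hodd : k % 2 = 1) {s : ∀ i, A i}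
    (h : AltTrue n A γ k s) : ∃ a, AltTrue n A γ (k + 1) (Function.update s ⟨k, hk⟩ a) := by
  rwa [AltTrue, dif_pos hk, if_neg (by omega)] at h

theorem AltTrue.congr {k : ℕ} {s s' : ∀ i, A i} (h : ∀ j : Fin n, (j : ℕ) < k → s j = s' j)
    (hs : AltTrue n A γ k s) : AltTrue n A γ k s' := by
  by_cases hk : k < n
  · have hupd (a : A ⟨k, hk⟩) (j : Fin n) (hj : (j : ℕ) < k + 1) :
        Function.update s ⟨k, hk⟩ a j = Function.update s' ⟨k, hk⟩ a j := by
      rcases eq_or_ne j ⟨k, hk⟩ with rfl | hne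
      · simp
      · rw [Function.update_of_ne hne, Function.update_of_ne hne]
        exact h j (by have := Fin.val_ne_of_ne hne; simp only at this; omega)
    rw [AltTrue, dif_pos hk] at hs ⊢
    split_ifs at hs ⊢
    · exact fun a => (hs a).congr (hupd a)
    · obtain ⟨a, ha⟩ := hs
      exact ⟨a, ha.congr (hupd a)⟩
  · have : s = s' := funext fun j => h j (by omega)
    exact this ▸ hs
termination_by n - k

end AltTrue

section Canonical

variable {d : ℕ} {X : Fin (2 * d + 1) → Type} {φ : (∀ i, X i) → Prop}

theorem CanA.snd_eq_true_of_even {i : Fin (2 * d + 1)} (hi : (i : ℕ) % 2 = 0) (x : CanA X i)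
    (q : Fin ((i : ℕ) % 2)) : x.2 q = true :=
  absurd q.isLt (by omega)

variable (φ) in
/-- Moralist wins the QBF game after the first `k` blocks of `s`, and all fresh variables
among these blocks are true. -/
def MoralistWins (s : ∀ i, CanA X i) (k : ℕ) : Prop :=
  (∀ j : Fin (2 * d + 1), (j : ℕ) < k → ∀ q, (s j).2 q = true) ∧
    AltTrue (2 * d + 1) X φ k (fun i => (s i).1)

theorem moralistWins_one {s : ∀ i, CanA X i}
    (hQ : AltTrue (2 * d + 1) X φ 0 (fun i => (s i).1)) : MoralistWins φ s 1 :=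
  ⟨fun j hj => CanA.snd_eq_true_of_even (by omega) _, hQ.succ_of_even (by omega) rfl⟩

theorem canGamma_of_moralistWins {s : ∀ i, CanA X i} (h : MoralistWins φ s (2 * d + 1)) :
    canGamma X φ s :=
  ⟨(altTrue_of_ge le_rfl).1 h.2, fun i => h.1 i i.isLt⟩

theorem MoralistWins.exists_move {s : ∀ i, CanA X i} {k : ℕ} (hk : k + 2 ≤ 2 * d + 1)
    (hodd : k % 2 = 1) (h : MoralistWins φ s k) :
    ∃ x : CanA X ⟨k, by omega⟩, ∀ u : ∀ i, CanA X i,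
      (∀ j : Fin (2 * d + 1), (j : ℕ) < k → u j = s j) → u ⟨k, by omega⟩ = x →
        MoralistWins φ u (k + 2) := by
  have hkn : k < 2 * d + 1 := by omega
  obtain ⟨a, ha⟩ := h.2.exists_succ_of_odd hkn hodd
  refine ⟨(a, fun _ => true), fun u hpre hk' => ⟨fun j hj q => ?_, ?_⟩⟩
  · rcases Nat.lt_or_ge j k with hjk | hjk
    · rw [hpre j hjk]
      exact h.1 j hjk q
    · obtain rfl | hj' : j = ⟨k, hkn⟩ ∨ (j : ℕ) = k + 1 := by
        rcases Nat.lt_or_ge (j : ℕ) (k + 1) with h' | h'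
        · exact .inl (Fin.ext (by simp only; omega))
        · exact .inr (by omega)
      · rw [hk']
      · exact CanA.snd_eq_true_of_even (by omega) _ q
  · refine AltTrue.succ_of_even (by omega) (by omega) (ha.congr fun j hj => ?_)
    rcases eq_or_ne j ⟨k, hkn⟩ with rfl | hne
    · simp [hk']
    · rw [Function.update_of_ne hne, hpre j]
      have := Fin.val_ne_of_ne hne
      simp only at this
      omega

theorem MoralistWins.not_gap {c k : ℕ} (hck : k + 2 * c = 2 * d + 1) {s : ∀ i, CanA X i}
    (h : MoralistWins φ s k) : ¬ Gap (canGamma X φ) c s := by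
  induction c generalizing k s with
  | zero =>
    obtain rfl : k = 2 * d + 1 := by omega
    exact fun hs => hs.1 (canGamma_of_moralistWins h)
  | succ c ih =>
    obtain ⟨x, hx⟩ := h.exists_move (by omega) (by omega)
    refine not_gap_succ_of_forall_not_gap ⟨k, by omega⟩ (Function.update s _ x)
      (fun j hj => Function.update_of_ne hj.ne _ _) fun u hu => ih (k := k + 2) (by omega) ?_
    refine hx u (fun j hj => ?_) (by simp [hu])
    rw [hu j (Fin.le_def.2 hj.le), Function.update_of_ne (Fin.ne_of_lt (Fin.lt_def.2 hj))]

end Canonical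

theorem qbf_true_imp_responsible_general {d : ℕ} (X : Fin (2*d+1) → Type)
    (φ : (∀ i, X i) → Prop)
    (hQ : ∀ s₀ : ∀ i, X i, AltTrue (2*d+1) X φ 0 s₀) :
    ∀ s : ∀ i, CanA X i,
      canGamma X φ s ∨ ∃ d', 0 < d' ∧ d' ≤ d ∧ ∃ i, Resp (canGamma X φ) d' i s := by
  intro s
  refine or_iff_not_imp_left.2 fun hγ => exists_resp_of_not_gap hγ ?_
  exact (moralistWins_one (hQ _)).not_gap (c := d) (by omega)

/-- If the closed formula `∀x₁ ∃x₂ ∀x₃ … ∀x_{2d+1} φ` is true, then for every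
action profile `s` of the canonical mechanism `M(φ, x₁,…,x_{2d+1})`, either the
deontic constraint holds at `s`, or some agent is `d'`-order responsible under
`s` for some positive `d' ≤ d`. -/
theorem qbf_true_imp_responsible {d : ℕ} (X : Fin (2*d+1) → Type)
    [∀ i, Nonempty (X i)] (φ : (∀ i, X i) → Prop)
    (hQ : ∀ s₀ : ∀ i, X i, AltTrue (2*d+1) X φ 0 s₀) :
    ∀ s : ∀ i, CanA X i,
      canGamma X φ s ∨ ∃ d', 0 < d' ∧ d' ≤ d ∧ ∃ i, Resp (canGamma X φ) d' i s :=
  qbf_true_imp_responsible_general X φ hQ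
end

section
/- For d ≥ 0, a quantifier-free Boolean formula φ over disjoint blocks x₁,…,x_{2d+1}, and the canonical mechanism M(φ, x₁,…,x_{2d+1}): if the closed formula ∀x₁ ∃x₂ ∀x₃ … ∀x_{2d+1} φ is false, then there exists an action profile s with γ false at s such that no agent is d'-order responsible under s for any d' ≤ d. -/
/-!
Falsity of the QBF gives the `∀`-player a winning strategy `δ` that never looks ahead. Measure a
profile by its immorality: the number of false fresh variables `q`, plus one if it follows `δ`.
Every profile of positive immorality violates `γ`. Any deviation by agent `i` lowers immorality by
at most one, since the agents after `i` can return to `δ` and set their `q` to false; by induction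
on `e`, no agent is `e`-order responsible at a profile of immorality greater than `e`. A profile
following `δ` with every `q` false has immorality `d + 1`.
-/

section Strategy

variable {n : ℕ} {A : Fin n → Type}

def NonAnticipating (σ : ∀ i : Fin n, (∀ j, A j) → A i) : Prop :=
  ∀ i x y, (∀ j < i, x j = y j) → σ i x = σ i y

namespace NonAnticipating

variable {σ : ∀ i : Fin n, (∀ j, A j) → A i}

theorem iterate_succ_apply_eq (hσ : NonAnticipating σ) (x : ∀ i, A i) :
    ∀ (k : ℕ) (j : Fin n), (j : ℕ) < k →
      (fun y i => σ i y)^[k + 1] x j = (fun y i => σ i y)^[k] x j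
  | 0, _, hj => absurd hj (Nat.not_lt_zero _)
  | k + 1, j, hj => by
    rw [Function.iterate_succ_apply' _ k, Function.iterate_succ_apply' _ (k + 1)]
    exact hσ j _ _ fun j' hj' => iterate_succ_apply_eq hσ x k j' (by omega)

theorem exists_fixedPoint (hσ : NonAnticipating σ) (x : ∀ i, A i) :
    ∃ u : ∀ i, A i, ∀ i, u i = σ i u :=
  ⟨_, fun i => (hσ.iterate_succ_apply_eq x n i i.isLt).symm.trans
    (congrFun (Function.iterate_succ_apply' _ n x) i)⟩

theorem exists_extension (hσ : NonAnticipating σ) (t r : ∀ j, A j) (i : Fin n) :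
    ∃ u : ∀ j, A j, (∀ j ≤ i, u j = t j) ∧ (∀ j, i < j → (j : ℕ) % 2 = 1 → u j = r j) ∧
      ∀ j, i < j → (j : ℕ) % 2 = 0 → u j = σ j u := by
  classical
  let τ : ∀ j : Fin n, (∀ k, A k) → A j := fun j x =>
    if j ≤ i then t j else if (j : ℕ) % 2 = 1 then r j else σ j x
  have hτ : NonAnticipating τ := by
    intro j x y hxy
    simp only [τ]
    split_ifs
    · rfl
    · rfl
    · exact hσ j x y hxy
  obtain ⟨u, hu⟩ := hτ.exists_fixedPoint t
  refine ⟨u, fun j hj => (hu j).trans (if_pos hj), fun j hj hodd => ?_, fun j hj heven => ?_⟩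
  · rw [hu j]; simp only [τ, if_neg (not_le.mpr hj), if_pos hodd]
  · rw [hu j]; simp only [τ, if_neg (not_le.mpr hj), heven]; rfl

end NonAnticipating

theorem eq_update_of_forall_lt {x s : ∀ i, A i} {k : Fin n} {a : A k}
    (hlow : ∀ j : Fin n, (j : ℕ) < k → x j = s j) (hk : x k = a) (j : Fin n)
    (hj : (j : ℕ) < k + 1) : x j = Function.update s k a j := by
  by_cases hjk : j = k
  · subst hjk; rw [hk, Function.update_self]
  · rw [Function.update_of_ne hjk]
    exact hlow j (by have := Fin.val_ne_of_ne hjk; omega)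

theorem exists_nonAnticipating_of_not_altTrue {φ : (∀ i, A i) → Prop} (k : ℕ) (s : ∀ i, A i)
    (h : ¬ AltTrue n A φ k s) :
    ∃ δ, NonAnticipating δ ∧ ∀ x : ∀ j, A j, (∀ j : Fin n, (j : ℕ) < k → x j = s j) →
      (∀ i : Fin n, k ≤ (i : ℕ) → (i : ℕ) % 2 = 0 → x i = δ i x) → ¬ φ x := by
  rw [AltTrue] at h
  split_ifs at h with hk hpar
  · obtain ⟨a, ha⟩ := not_forall.mp h
    obtain ⟨δ, hδ, hwin⟩ := exists_nonAnticipating_of_not_altTrue (k + 1) _ ha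
    refine ⟨Function.update δ ⟨k, hk⟩ fun _ => a, fun i x y hxy => ?_, fun x hlow hfol => ?_⟩
    · by_cases hik : i = ⟨k, hk⟩
      · subst hik; simp only [Function.update_self]
      · simp only [Function.update_of_ne hik]; exact hδ i x y hxy
    · have hxk : x ⟨k, hk⟩ = a := by
        simpa only [Function.update_self] using hfol ⟨k, hk⟩ le_rfl hpar
      refine hwin x (eq_update_of_forall_lt hlow hxk) fun i hi heven => ?_
      have hik : i ≠ ⟨k, hk⟩ := fun h => by simp [h] at hi
      simpa only [Function.update_of_ne hik] using hfol i (by omega) heven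
  · have h' : ∀ a, ¬ AltTrue n A φ (k + 1) (Function.update s ⟨k, hk⟩ a) := not_exists.mp h
    choose D hD hwin using fun a => exists_nonAnticipating_of_not_altTrue (k + 1) _ (h' a)
    refine ⟨fun i x => if k < (i : ℕ) then D (x ⟨k, hk⟩) i x else s i,
      fun i x y hxy => ?_, fun x hlow hfol => ?_⟩
    · dsimp only
      split_ifs with hki
      · rw [hxy ⟨k, hk⟩ hki]; exact hD _ i x y hxy
      · rfl
    · refine hwin (x ⟨k, hk⟩) x (eq_update_of_forall_lt (k := ⟨k, hk⟩) hlow rfl)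
        fun i hi heven => ?_
      simpa only [if_pos (show k < (i : ℕ) by omega)] using hfol i (by omega) heven
  · refine ⟨fun i _ => s i, fun _ _ _ _ => rfl, fun x hlow _ => ?_⟩
    rwa [funext fun j => hlow j (by omega)]
termination_by n - k

theorem exists_nonAnticipating_of_not_altTrue_zero {φ : (∀ i, A i) → Prop} (s : ∀ i, A i)
    (h : ¬ AltTrue n A φ 0 s) : ∃ δ, NonAnticipating δ ∧ ∀ x, Conform δ x → ¬ φ x := by
  obtain ⟨δ, hδ, hwin⟩ := exists_nonAnticipating_of_not_altTrue 0 s h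
  exact ⟨δ, hδ, fun x hx => hwin x (fun _ h => absurd h (Nat.not_lt_zero _)) fun i _ => hx i⟩

end Strategy

section Canonical

variable {d : ℕ} {X : Fin (2*d+1) → Type} {φ : (∀ i, X i) → Prop}

def canSigma (δ : ∀ i : Fin (2*d+1), (∀ j, X j) → X i) :
    ∀ i : Fin (2*d+1), (∀ j, CanA X j) → CanA X i :=
  fun i s => (δ i fun j => (s j).1, fun _ => false)

theorem NonAnticipating.canSigma {δ : ∀ i : Fin (2*d+1), (∀ j, X j) → X i}
    (hδ : NonAnticipating δ) : NonAnticipating (canSigma δ) := by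
  intro i x y hxy
  simp only [_root_.canSigma]
  rw [hδ i _ _ fun j hj => congrArg Prod.fst (hxy j hj)]

open Classical in
def falseFresh (s : ∀ i, CanA X i) : Finset (Fin (2*d+1)) :=
  Finset.univ.filter fun i => ∃ j, (s i).2 j = false

theorem immorality_eq (σ : ∀ i : Fin (2*d+1), (∀ j, CanA X j) → CanA X i) (s : ∀ i, CanA X i) :
    open Classical in
    immorality σ s = (falseFresh s).card + if Conform σ s then 1 else 0 := rfl

theorem mem_falseFresh {s : ∀ i, CanA X i} {i : Fin (2*d+1)} :
    i ∈ falseFresh s ↔ ∃ j, (s i).2 j = false := by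
  simp [falseFresh]

theorem odd_of_mem_falseFresh {s : ∀ i, CanA X i} {i : Fin (2*d+1)} (hi : i ∈ falseFresh s) :
    (i : ℕ) % 2 = 1 := by
  obtain ⟨j, -⟩ := mem_falseFresh.mp hi
  have := j.isLt
  omega

theorem le_card_falseFresh {s : ∀ i, CanA X i} (hs : ∀ i j, (s i).2 j = false) :
    d ≤ (falseFresh s).card := by
  let oddIdx : Fin d ↪ Fin (2*d+1) :=
    ⟨fun k => ⟨2 * k + 1, by omega⟩, fun a b h => Fin.ext (by simpa using h)⟩
  calc d = (Finset.univ.map oddIdx).card := by simp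
    _ ≤ (falseFresh s).card := Finset.card_le_card fun i hi => by
        obtain ⟨k, -, rfl⟩ := Finset.mem_map.mp hi
        exact mem_falseFresh.mpr ⟨⟨0, show 0 < (2 * (k : ℕ) + 1) % 2 by omega⟩, hs _ _⟩

variable {δ : ∀ i : Fin (2*d+1), (∀ j, X j) → X i}

theorem not_canGamma_of_immorality_pos (hwin : ∀ x, Conform δ x → ¬ φ x)
    {s : ∀ i, CanA X i} (hs : 0 < immorality (canSigma δ) s) : ¬ canGamma X φ s := by
  rintro ⟨hφ, hq⟩
  by_cases hconf : Conform (canSigma δ) s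
  · exact hwin _ (fun i hi => congrArg Prod.fst (hconf i hi)) hφ
  · have hempty : falseFresh s = ∅ :=
      Finset.eq_empty_of_forall_notMem fun i hi => by
        obtain ⟨j, hj⟩ := mem_falseFresh.mp hi
        simp [hq i j] at hj
    rw [immorality_eq, hempty, if_neg hconf] at hs
    simp at hs

theorem exists_extension_immorality_le (hδ : NonAnticipating δ) (s t : ∀ j, CanA X j)
    (i : Fin (2*d+1)) (hts : ∀ j < i, t j = s j) :
    ∃ u : ∀ j, CanA X j, (∀ j ≤ i, u j = t j) ∧
      immorality (canSigma δ) s ≤ immorality (canSigma δ) u + 1 := by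
  obtain ⟨u, hut, hur, hus⟩ :=
    hδ.canSigma.exists_extension t (fun j => ((t j).1, fun _ => false)) i
  refine ⟨u, hut, ?_⟩
  have hsub : falseFresh s ⊆ insert i (falseFresh u) := by
    intro j hj
    rcases lt_trichotomy j i with hji | rfl | hij
    · obtain ⟨k, hk⟩ := mem_falseFresh.mp hj
      exact Finset.mem_insert_of_mem
        (mem_falseFresh.mpr ⟨k, by rw [hut j hji.le, hts j hji, hk]⟩)
    · exact Finset.mem_insert_self _ _
    · obtain ⟨k, -⟩ := mem_falseFresh.mp hj
      exact Finset.mem_insert_of_mem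
        (mem_falseFresh.mpr ⟨k, by rw [hur j hij (odd_of_mem_falseFresh hj)]⟩)
  have hconf : Conform (canSigma δ) s → (i : ℕ) % 2 = 1 → Conform (canSigma δ) u := by
    intro hs hi j hj
    rcases lt_trichotomy j i with hji | rfl | hij
    · rw [hut j hji.le, hts j hji, hs j hj]
      exact hδ.canSigma j s u fun k hk => by rw [hut k (hk.trans hji).le, hts k (hk.trans hji)]
    · omega
    · exact hus j hij hj
  rw [immorality_eq, immorality_eq]
  by_cases hi : i ∈ falseFresh s
  · have hcard := (Finset.card_le_card hsub).trans (Finset.card_insert_le _ _)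
    have hconf' := fun hs => hconf hs (odd_of_mem_falseFresh hi)
    split_ifs with hs hu
    · omega
    · exact absurd (hconf' hs) hu
    · omega
    · omega
  · have := Finset.card_le_card ((Finset.subset_insert_iff_of_notMem hi).mp hsub)
    split_ifs <;> omega

theorem not_resp_of_lt_immorality (hδ : NonAnticipating δ) (hwin : ∀ x, Conform δ x → ¬ φ x)
    (e : ℕ) {s : ∀ i, CanA X i} (hs : e < immorality (canSigma δ) s) (i : Fin (2*d+1)) :
    ¬ Resp (canGamma X φ) e i s := by
  induction e using Nat.strong_induction_on generalizing s i with
  | _ e ih =>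
    cases e with
    | zero => simp [Resp]
    | succ e =>
      rw [Resp]
      rintro ⟨-, t, hts, hall⟩
      obtain ⟨u, hut, hu⟩ := exists_extension_immorality_le hδ s t i hts
      exact hall u hut ⟨not_canGamma_of_immorality_pos hwin (by omega),
        fun e' he' j => ih e' (by omega) (by omega) j⟩

end Canonical

theorem qbf_false_imp_gap_general {d : ℕ} (X : Fin (2*d+1) → Type)
    (φ : (∀ i, X i) → Prop)
    (hQ : ¬ ∀ s₀ : ∀ i, X i, AltTrue (2*d+1) X φ 0 s₀) :
    ∃ s : ∀ i, CanA X i, ¬ canGamma X φ s ∧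
      ∀ d' ≤ d, ∀ i, ¬ Resp (canGamma X φ) d' i s := by
  obtain ⟨s₀, hs₀⟩ := not_forall.mp hQ
  obtain ⟨δ, hδ, hwin⟩ := exists_nonAnticipating_of_not_altTrue_zero s₀ hs₀
  obtain ⟨u, hu⟩ := hδ.canSigma.exists_fixedPoint fun j => (s₀ j, fun _ => false)
  have himm : d + 1 ≤ immorality (canSigma δ) u := by
    have := le_card_falseFresh (s := u) fun i j => by rw [hu i]; rfl
    rw [immorality_eq, if_pos (show Conform _ u from fun i _ => hu i)]
    omega
  exact ⟨u, not_canGamma_of_immorality_pos hwin (by omega),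
    fun d' hd' => not_resp_of_lt_immorality hδ hwin d' (by omega)⟩

/-- If the closed formula `∀x₁ ∃x₂ ∀x₃ … ∀x_{2d+1} φ` is false, then the
canonical mechanism has a profile `s` violating the deontic constraint under
which no agent is `d'`-order responsible for any `d' ≤ d`. -/
theorem qbf_false_imp_gap {d : ℕ} (X : Fin (2*d+1) → Type)
    [∀ i, Nonempty (X i)] (φ : (∀ i, X i) → Prop)
    (hQ : ¬ ∀ s₀ : ∀ i, X i, AltTrue (2*d+1) X φ 0 s₀) :
    ∃ s : ∀ i, CanA X i, ¬ canGamma X φ s ∧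
      ∀ d' ≤ d, ∀ i, ¬ Resp (canGamma X φ) d' i s :=
  qbf_false_imp_gap_general X φ hQ
end

section
/- In the three-agent mechanism with one Boolean variable per agent and deontic constraint γ = ¬(pₐ ∨ p_b ∨ p_c), the second-order responsibility gap is exactly the set of profiles with pₐ = 1: a profile s violates γ with no agent first- or second-order responsible under s if and only if pₐ = 1 at s. -/
/-- Deontic constraint `γ = ¬(pₐ ∨ p_b ∨ p_c)` of the three-agent mechanism with
one Boolean variable per agent (agents A, B, C acting in order). -/
def gamma3 (s : ∀ _ : Fin 3, Bool) : Prop :=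
  ¬ (s 0 = true ∨ s 1 = true ∨ s 2 = true)

lemma resp0 (i : Fin 3) (s : ∀ _ : Fin 3, Bool) : ¬ Resp gamma3 0 i s := by
  rw [Resp]; exact id

lemma resp0_iff (i : Fin 3) (s : ∀ _ : Fin 3, Bool) : Resp gamma3 0 i s ↔ False := by
  rw [Resp]

lemma resp1_iff (i : Fin 3) (s : ∀ _ : Fin 3, Bool) :
    Resp gamma3 1 i s ↔ (i = 2 ∧ s 0 = false ∧ s 1 = false ∧ s 2 = true) := by
  rw [show (1:ℕ) = 0+1 from rfl, Resp]
  have h0 : ∀ (v : ∀ _ : Fin 3, Bool), (∀ e ≤ 0, ∀ j, ¬ Resp gamma3 e j v) ↔ True := by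
    intro v; simp only [Nat.le_zero, forall_eq, iff_true]
    exact fun j => resp0 j v
  simp only [h0, and_true]
  simp only [gamma3]
  revert i s
  decide

lemma ball_le_one (P : ℕ → Prop) : (∀ e ≤ 1, P e) ↔ P 0 ∧ P 1 := by
  constructor
  · exact fun h => ⟨h 0 (by omega), h 1 le_rfl⟩
  · rintro ⟨h0, h1⟩ e he
    interval_cases e <;> assumption

lemma gap1 (u : ∀ _ : Fin 3, Bool) :
    (¬ gamma3 u ∧ ∀ e ≤ 1, ∀ j, ¬ Resp gamma3 e j u) ↔ (u 0 = true ∨ u 1 = true) := by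
  simp only [ball_le_one, resp1_iff, resp0_iff, gamma3]
  revert u
  decide

lemma resp2_iff (i : Fin 3) (s : ∀ _ : Fin 3, Bool) :
    Resp gamma3 2 i s ↔ (i = 1 ∧ s 0 = false ∧ s 1 = true) := by
  show Resp gamma3 (1+1) i s ↔ _
  rw [Resp]
  simp only [gap1]
  revert i s
  decide

/-- The second-order responsibility gap is exactly the set of profiles with
`pₐ = 1`: the constraint is violated with no agent first- or second-order
responsible iff `pₐ = 1`. -/
theorem second_order_gap_iff (s : ∀ _ : Fin 3, Bool) :
    (¬ gamma3 s ∧ (∀ i, ¬ Resp gamma3 1 i s) ∧ (∀ i, ¬ Resp gamma3 2 i s)) ↔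
      s 0 = true := by
  simp only [resp1_iff, resp2_iff, gamma3]
  revert s
  decide
end

section
/- In the two-agent mechanism with variables pₐ (agent 1) and p_b (agent 2), acting in that order, and deontic constraint γ = ¬(pₐ ∨ p_b), the first-order responsibility gap is exactly {(1,0), (1,1)}: a profile violates γ with no agent first-order responsible iff pₐ = 1; and under both such profiles, agent 1 is second-order responsible. -/
/-- Deontic constraint `γ = ¬(pₐ ∨ p_b)` of the two-agent mechanism with one
Boolean variable per agent (agent 1 controls `pₐ = s 0`, agent 2 controls
`p_b = s 1`, acting in that order). -/
def gamma2 (s : ∀ _ : Fin 2, Bool) : Prop :=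
  ¬ (s 0 = true ∨ s 1 = true)

lemma resp0_s15 {n : ℕ} {A : Fin n → Type} (γ : (∀ i, A i) → Prop) (i s) :
    ¬ Resp γ 0 i s := by simp [Resp]

lemma fin2_le0 (j : Fin 2) (h : j ≤ 0) : j = 0 := by
  omega

lemma r1_0 (s : ∀ _ : Fin 2, Bool) : ¬ Resp gamma2 1 0 s := by
  rw [Resp]
  rintro ⟨_, t, _, ht⟩
  refine ht ![t 0, true] ?_ ⟨?_, ?_⟩
  · intro j hj; rw [fin2_le0 j hj]; rfl
  · simp [gamma2]
  · intro e he j; rw [Nat.le_zero.mp he]; exact resp0_s15 _ _ _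

lemma r1_1_true (s : ∀ _ : Fin 2, Bool) (h0 : s 0 = false) (h1 : s 1 = true) :
    Resp gamma2 1 1 s := by
  rw [Resp]
  refine ⟨⟨by simp [gamma2, h1], ?_⟩, ![false, false], ?_, ?_⟩
  · intro e he j; rw [Nat.le_zero.mp he]; exact resp0_s15 _ _ _
  · intro j hj
    have : j = 0 := by omega
    rw [this]; simpa using h0.symm
  · rintro u hu ⟨hγ, _⟩
    apply hγ
    have h0' : u 0 = false := by simpa using hu 0 (by omega)
    have h1' : u 1 = false := by simpa using hu 1 (by omega)
    simp [gamma2, h0', h1']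

lemma r1_1_not (s : ∀ _ : Fin 2, Bool) (h0 : s 0 = true) : ¬ Resp gamma2 1 1 s := by
  rw [Resp]
  rintro ⟨_, t, ht, ht'⟩
  have h0' : t 0 = true := by rw [ht 0 (by omega)]; exact h0
  refine ht' t (fun _ _ => rfl) ⟨?_, ?_⟩
  · simp [gamma2, h0']
  · intro e he j; rw [Nat.le_zero.mp he]; exact resp0_s15 _ _ _

/-- The first-order responsibility gap is exactly `{(1,0), (1,1)}`: a profile
violates `γ` with no agent first-order responsible iff `pₐ = 1`; and under both
such profiles agent 1 is second-order responsible. -/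
theorem two_agent_gap :
    (∀ s : ∀ _ : Fin 2, Bool,
      (¬ gamma2 s ∧ ∀ i, ¬ Resp gamma2 1 i s) ↔ s 0 = true) ∧
    (∀ s : ∀ _ : Fin 2, Bool, s 0 = true → Resp gamma2 2 0 s) := by
  constructor
  · intro s
    constructor
    · rintro ⟨hγ, hR⟩
      by_contra h0
      have h0 : s 0 = false := by simpa using h0
      have h1 : s 1 = true := by simpa [gamma2, h0] using hγ
      exact hR 1 (r1_1_true s h0 h1)
    · intro h0
      refine ⟨by simp [gamma2, h0], ?_⟩
      intro i
      fin_cases i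
      · exact r1_0 s
      · exact r1_1_not s h0
  · intro s h0
    have gap : ∀ u : ∀ _ : Fin 2, Bool, u 0 = true →
        (¬ gamma2 u ∧ ∀ e ≤ 1, ∀ j, ¬ Resp gamma2 e j u) := by
      intro u hu
      refine ⟨by simp [gamma2, hu], ?_⟩
      intro e he j
      interval_cases e
      · exact resp0_s15 _ _ _
      · fin_cases j
        · exact r1_0 u
        · exact r1_1_not u hu
    rw [Resp]
    refine ⟨gap s h0, ![false, false], by omega, ?_⟩
    rintro u hu ⟨hγ, hR⟩
    have h0' : u 0 = false := by simpa using hu 0 (by omega)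
    have h1 : u 1 = true := by simpa [gamma2, h0'] using hγ
    exact hR 1 le_rfl 1 (r1_1_true u h0' h1)
end
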